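/- arXiv:1307.1365 — 2 statements merged into one kernel-verified Lean document; each statement's English description precedes it below -/
import Mathlib

section
/- Let (B_s)_{s≥0} be a standard Brownian motion, let t ≥ 1, let 0 ≤ u ≤ t - 1, let z ≥ 0, and let A be an event measurable with respect to the σ-algebra generated by (B_{s+u} - B_u)_{s ∈ [0,1]}. Then there exists a universal constant c > 0 such that P(B_t ∈ [z, z+1] and A) ≤ c/√t · P(A). -/
open MeasureTheory ProbabilityTheory Set

/-- A standard one-dimensional Brownian motion started at 0: continuous paths,
stationary Gaussian increments, and independent increments. -/
structure IsBrownianMotion {Ω : Type*} [MeasurableSpace Ω] (P : Measure Ω)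
    (B : ℝ → Ω → ℝ) : Prop where
  isProbability : IsProbabilityMeasure P
  measurable : ∀ t : ℝ, Measurable (B t)
  init : ∀ ω, B 0 ω = 0
  cont : ∀ ω, Continuous fun t => B t ω
  gaussian_incr : ∀ s t : ℝ, 0 ≤ s → s ≤ t →
    P.map (fun ω => B t ω - B s ω) = gaussianReal 0 (Real.toNNReal (t - s))
  indep_incr : ∀ (n : ℕ) (τ : Fin (n + 1) → ℝ), Monotone τ → 0 ≤ τ 0 →
    iIndepFun
      (fun i : Fin n => fun ω => B (τ i.succ) ω - B (τ i.castSucc) ω) P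

open Function
open scoped NNReal ENNReal Real

/-!
Write `B_t = (B_u + (B_t - B_{u+1})) + (B_{u+1} - B_u)`. The first summand `S` is a centred
Gaussian of variance `t - 1` and is independent of the σ-algebra `G` of increments in
`[u, u + 1]`, while the second summand and `A` are `G`-measurable. Conditioning on `G`, the
probability that `B_t` lands in a unit interval is at most the largest mass `S` gives to a unit
interval, `≤ 1 / √(2π(t - 1))`, which is `≤ 2 / √t` once `t ≥ 2`; for `t < 2` the bound
`2 / √t > 1` is trivial. Independence from `G` reduces to finitely many times in `[u, u + 1]`;
sorting them together with `0, u, u + 1, t`, both sides become sums over disjoint blocks of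
increments of `B` along the sorted times, and these blocks are independent.
-/

lemma gaussianPDFReal_le (μ : ℝ) (v : ℝ≥0) (x : ℝ) :
    gaussianPDFReal μ v x ≤ (√(2 * π * v))⁻¹ := by
  refine mul_le_of_le_one_right (by positivity) (Real.exp_le_one_iff.2 ?_)
  exact div_nonpos_of_nonpos_of_nonneg (neg_nonpos.2 (sq_nonneg _)) (by positivity)

lemma gaussianReal_Icc_le (μ : ℝ) {v : ℝ≥0} (hv : v ≠ 0) (a b : ℝ) :
    gaussianReal μ v (Icc a b) ≤ ENNReal.ofReal ((b - a) / √(2 * π * v)) := by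
  calc gaussianReal μ v (Icc a b)
      ≤ ∫⁻ _ in Icc a b, ENNReal.ofReal (√(2 * π * v))⁻¹ := by
        rw [gaussianReal_apply μ hv]
        exact lintegral_mono fun x => ENNReal.ofReal_le_ofReal (gaussianPDFReal_le μ v x)
    _ = ENNReal.ofReal ((b - a) / √(2 * π * v)) := by
        rw [setLIntegral_const, Real.volume_Icc, ← ENNReal.ofReal_mul (by positivity),
          div_eq_mul_inv, mul_comm]

lemma one_div_sqrt_two_pi_mul_sub_one_le {t : ℝ} (ht : 2 ≤ t) :
    1 / √(2 * π * (t - 1)) ≤ 2 / √t := by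
  have hpos : 0 < √(2 * π * (t - 1)) := Real.sqrt_pos.2 (by nlinarith [Real.pi_gt_three])
  rw [div_le_div_iff₀ hpos (Real.sqrt_pos.2 (by linarith)), one_mul]
  calc √t ≤ √(2 ^ 2 * (2 * π * (t - 1))) := Real.sqrt_le_sqrt (by nlinarith [Real.pi_gt_three])
    _ = 2 * √(2 * π * (t - 1)) := by rw [Real.sqrt_mul (by norm_num), Real.sqrt_sq two_pos.le]

lemma Monotone.invFun_le_invFun {ι α : Type*} [LinearOrder ι] [Nonempty ι] [PartialOrder α]
    {f : ι → α} (hf : Monotone f) {x y : α} (hx : x ∈ range f) (hy : y ∈ range f)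
    (hxy : x ≤ y) : invFun f x ≤ invFun f y := by
  rcases hxy.eq_or_lt with rfl | hlt
  · exact le_rfl
  · exact (hf.reflect_lt (by rwa [invFun_eq hx, invFun_eq hy])).le

lemma Finset.exists_monotone_range_eq {α : Type*} [LinearOrder α] (T : Finset α)
    (hT : T.Nonempty) : ∃ ρ : ℕ → α, Monotone ρ ∧ Set.range ρ = T := by
  have hpos : 0 < T.card := hT.card_pos
  let e := T.orderEmbOfFin rfl
  refine ⟨fun k => e ⟨min k (T.card - 1), by omega⟩, fun i j hij => e.monotone ?_, ?_⟩
  · exact Fin.mk_le_mk.2 (min_le_min_right _ hij)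
  · rw [← T.range_orderEmbOfFin rfl]
    refine Set.Subset.antisymm (Set.range_subset_iff.2 fun k => Set.mem_range_self _) ?_
    rintro _ ⟨i, rfl⟩
    exact ⟨i, by simp [e, Nat.min_eq_left (Nat.le_sub_one_of_lt i.isLt)]⟩

section Measurability

variable {Ω : Type*} {X : ℕ → Ω → ℝ} {i j : ℕ}

lemma measurable_sub_of_measurable_sub_succ {m : MeasurableSpace Ω} (hij : i ≤ j)
    (h : ∀ k, i ≤ k → k < j → Measurable[m] fun ω => X (k + 1) ω - X k ω) :
    Measurable[m] fun ω => X j ω - X i ω := by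
  induction j, hij using Nat.le_induction with
  | base => simpa only [sub_self] using measurable_const
  | succ j hij ih =>
    convert (h j hij j.lt_succ_self).add (ih fun k hik hkj => h k hik (by omega)) using 1
    ext ω
    simp

lemma measurable_sub_iSup_comap_sub_succ {S : Set ℕ} (hij : i ≤ j) (hS : Ico i j ⊆ S) :
    Measurable[⨆ k ∈ S, MeasurableSpace.comap (fun ω => X (k + 1) ω - X k ω) inferInstance]
      fun ω => X j ω - X i ω :=
  measurable_sub_of_measurable_sub_succ hij fun _ hik hkj =>
    Measurable.of_comap_le (le_biSup
      (fun k => MeasurableSpace.comap (fun ω => X (k + 1) ω - X k ω) inferInstance) (hS ⟨hik, hkj⟩))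

end Measurability

lemma indep_biSup_of_forall_finset {Ω ι : Type*} {mΩ : MeasurableSpace Ω} {μ : Measure Ω}
    [IsZeroOrProbabilityMeasure μ] {m₁ : MeasurableSpace Ω} {m : ι → MeasurableSpace Ω}
    {T : Set ι} (h₁ : m₁ ≤ mΩ) (hm : ∀ i, m i ≤ mΩ)
    (h : ∀ F : Finset ι, ↑F ⊆ T → Indep m₁ (⨆ i ∈ F, m i) μ) :
    Indep m₁ (⨆ i ∈ T, m i) μ := by
  classical
  have hsup : ⨆ i ∈ T, m i = ⨆ F : {F : Finset ι // ↑F ⊆ T}, ⨆ i ∈ F.1, m i := by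
    refine le_antisymm (iSup₂_le fun i hi => ?_) (iSup_le fun F => biSup_mono fun i hi => F.2 hi)
    exact le_iSup_of_le ⟨{i}, by simpa using hi⟩
      (le_iSup₂_of_le i (Finset.mem_singleton_self i) le_rfl)
  rw [hsup]
  refine (indep_iSup_of_directed_le (m := fun F : {F : Finset ι // ↑F ⊆ T} => ⨆ i ∈ F.1, m i)
    (fun F => (h F.1 F.2).symm) (fun F => iSup₂_le fun i _ => hm i) h₁ ?_).symm
  rintro ⟨F, hF⟩ ⟨G, hG⟩
  refine ⟨⟨F ∪ G, by rw [Finset.coe_union]; exact union_subset hF hG⟩, ?_, ?_⟩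
  · exact biSup_mono fun i hi => Finset.mem_union_left G hi
  · exact biSup_mono fun i hi => Finset.mem_union_right F hi

section Conditioning

variable {Ω β : Type*} {m mΩ : MeasurableSpace Ω} {P : Measure Ω} [IsFiniteMeasure P]
  [MeasurableSpace β] {S : Ω → β} {A : Set Ω}

lemma map_restrict_prodMk_eq_prod_of_indep {γ : Type*} [MeasurableSpace γ] {X : Ω → γ}
    (hm : m ≤ mΩ) (hS : Measurable S) (hind : Indep (MeasurableSpace.comap S inferInstance) m P)
    (hX : Measurable[m] X) (hA : MeasurableSet[m] A) :
    (P.restrict A).map (fun ω => (S ω, X ω)) = (P.map S).prod ((P.restrict A).map X) := by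
  have hXΩ : Measurable X := hX.mono hm le_rfl
  refine (Measure.prod_eq fun s t hs ht => ?_).symm
  have hrect : MeasurableSet[m] (X ⁻¹' t ∩ A) := (hX ht).inter hA
  rw [Measure.map_apply (hS.prodMk hXΩ) (hs.prod ht), Measure.map_apply hS hs,
    Measure.map_apply hXΩ ht, Measure.restrict_apply (hXΩ ht), Measure.restrict_apply
      ((hS.prodMk hXΩ) (hs.prod ht)), mk_preimage_prod, inter_assoc]
  exact (Indep_iff _ _ P).1 hind _ _ ⟨s, hs, rfl⟩ hrect

lemma measure_add_mem_inter_le [Add β] [MeasurableAdd₂ β] {X : Ω → β} {E : Set β} {K : ℝ≥0∞}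
    (hm : m ≤ mΩ) (hS : Measurable S) (hind : Indep (MeasurableSpace.comap S inferInstance) m P)
    (hX : Measurable[m] X) (hA : MeasurableSet[m] A) (hE : MeasurableSet E)
    (hK : ∀ x, P.map S {s | s + x ∈ E} ≤ K) :
    P ({ω | S ω + X ω ∈ E} ∩ A) ≤ K * P A := by
  have hXΩ : Measurable X := hX.mono hm le_rfl
  have hsum : MeasurableSet {p : β × β | p.1 + p.2 ∈ E} := measurable_add hE
  calc P ({ω | S ω + X ω ∈ E} ∩ A)
      = ((P.restrict A).map fun ω => (S ω, X ω)) {p | p.1 + p.2 ∈ E} := by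
        rw [Measure.map_apply (hS.prodMk hXΩ) hsum,
          Measure.restrict_apply ((hS.prodMk hXΩ) hsum)]
        rfl
    _ = ∫⁻ x, P.map S {s | s + x ∈ E} ∂(P.restrict A).map X := by
        rw [map_restrict_prodMk_eq_prod_of_indep hm hS hind hX hA, Measure.prod_apply_symm hsum]
        rfl
    _ ≤ ∫⁻ _, K ∂(P.restrict A).map X := lintegral_mono hK
    _ = K * P A := by
        rw [lintegral_const, Measure.map_apply hXΩ MeasurableSet.univ, preimage_univ,
          Measure.restrict_apply_univ]

end Conditioning

abbrev incrementSigma {Ω : Type*} (B : ℝ → Ω → ℝ) (u ℓ : ℝ) : MeasurableSpace Ω :=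
  ⨆ s ∈ Icc 0 ℓ, MeasurableSpace.comap (fun ω => B (s + u) ω - B u ω) inferInstance

lemma measurable_incrementSigma {Ω : Type*} {B : ℝ → Ω → ℝ} {u ℓ s : ℝ} (hs : s ∈ Icc 0 ℓ) :
    Measurable[incrementSigma B u ℓ] fun ω => B (s + u) ω - B u ω :=
  Measurable.of_comap_le
    (le_biSup (fun s => MeasurableSpace.comap (fun ω => B (s + u) ω - B u ω) inferInstance) hs)

namespace IsBrownianMotion

variable {Ω : Type*} [MeasurableSpace Ω] {P : Measure Ω} {B : ℝ → Ω → ℝ}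

lemma incrementSigma_le (hB : IsBrownianMotion P B) (u ℓ : ℝ) :
    incrementSigma B u ℓ ≤ ‹MeasurableSpace Ω› :=
  iSup₂_le fun _ _ => ((hB.measurable _).sub (hB.measurable u)).comap_le

lemma iIndepFun_increments (hB : IsBrownianMotion P B) {ρ : ℕ → ℝ} (hρ : Monotone ρ)
    (h0 : 0 ≤ ρ 0) : iIndepFun (fun k ω => B (ρ (k + 1)) ω - B (ρ k) ω) P := by
  refine iIndepFun_iff_finset.2 fun s => ?_
  obtain ⟨N, hN⟩ := s.exists_nat_subset_range
  exact (hB.indep_incr N (fun i => ρ i) (fun i j hij => hρ hij) h0).precomp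
    (g := fun k : s => ⟨k, Finset.mem_range.1 (hN k.2)⟩)
    fun k l hkl => Subtype.ext (by simpa using hkl)

lemma indepFun_sub_sub (hB : IsBrownianMotion P B) {r s t v : ℝ} (hr : 0 ≤ r) (hrs : r ≤ s)
    (hst : s ≤ t) (htv : t ≤ v) :
    IndepFun (fun ω => B s ω - B r ω) (fun ω => B v ω - B t ω) P := by
  have hmono : Monotone ![r, s, t, v] := by
    refine Fin.monotone_iff_le_succ.2 fun i => ?_
    fin_cases i <;> simpa
  exact (hB.indep_incr 3 ![r, s, t, v] hmono hr).indepFun (i := 0) (j := 2) (by decide)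

lemma map_add_sub (hB : IsBrownianMotion P B) {u v t : ℝ} (hu : 0 ≤ u) (huv : u ≤ v)
    (hvt : v ≤ t) :
    P.map (fun ω => B u ω + (B t ω - B v ω)) = gaussianReal 0 (u + (t - v)).toNNReal := by
  have h := gaussianReal_add_gaussianReal_of_indepFun (hB.indepFun_sub_sub le_rfl hu huv hvt)
    (hB.gaussian_incr 0 u le_rfl hu) (hB.gaussian_incr v t (hu.trans huv) hvt)
  simp only [hB.init, sub_zero, add_zero] at h
  rw [Real.toNNReal_add hu (sub_nonneg.2 hvt)]
  exact h

lemma indep_comap_iSup_finset (hB : IsBrownianMotion P B) {u ℓ t : ℝ} (hu : 0 ≤ u)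
    (hℓ : 0 ≤ ℓ) (ht : ℓ + u ≤ t) {F : Finset ℝ} (hF : ↑F ⊆ Icc 0 ℓ) :
    Indep (MeasurableSpace.comap (fun ω => (B u ω, B t ω - B (ℓ + u) ω)) inferInstance)
      (⨆ s ∈ F, MeasurableSpace.comap (fun ω => B (s + u) ω - B u ω) inferInstance) P := by
  classical
  have hP := hB.isProbability
  set T : Finset ℝ := {0, u, ℓ + u, t} ∪ F.image (· + u)
  obtain ⟨ρ, hρ, hρT⟩ := T.exists_monotone_range_eq (by simp [T])
  have hT : ∀ x ∈ T, 0 ≤ x := by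
    simp only [T, Finset.mem_union, Finset.mem_insert, Finset.mem_singleton, Finset.mem_image]
    rintro x (hx | ⟨s, hs, rfl⟩)
    · rcases hx with rfl | rfl | rfl | rfl <;> linarith
    · linarith [(hF hs).1]
  have hmem : ∀ x ∈ T, x ∈ Set.range ρ := fun x hx => hρT ▸ hx
  have h0 := hmem 0 (by simp [T])
  have hu' := hmem u (by simp [T])
  have hℓu := hmem (ℓ + u) (by simp [T])
  have ht' := hmem t (by simp [T])
  have hFT : ∀ s ∈ F, s + u ∈ Set.range ρ := fun s hs => hmem _ (by simp [T, hs])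
  let m : ℕ → MeasurableSpace Ω := fun k =>
    MeasurableSpace.comap (fun ω => B (ρ (k + 1)) ω - B (ρ k) ω) inferInstance
  have hdiff : ∀ {x y : ℝ} {S : Set ℕ}, x ∈ Set.range ρ → y ∈ Set.range ρ → x ≤ y →
      Ico (invFun ρ x) (invFun ρ y) ⊆ S → Measurable[⨆ k ∈ S, m k] fun ω => B y ω - B x ω := by
    intro x y S hx hy hxy hS
    simpa only [invFun_eq hx, invFun_eq hy] using
      measurable_sub_iSup_comap_sub_succ (X := fun k => B (ρ k)) (hρ.invFun_le_invFun hx hy hxy) hS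
  -- increments of `ρ` outside, resp. inside, the window `[u, ℓ + u]`
  set I : Set ℕ := {k | k < invFun ρ u ∨ invFun ρ (ℓ + u) ≤ k}
  have hindep : Indep (⨆ k ∈ I, m k) (⨆ k ∈ Iᶜ, m k) P :=
    indep_iSup_of_disjoint (fun k => ((hB.measurable _).sub (hB.measurable _)).comap_le)
      ((iIndepFun_iff_iIndep _ _ _).1
        (hB.iIndepFun_increments hρ (hT _ (Finset.mem_coe.1 (hρT ▸ mem_range_self 0)))))
      disjoint_compl_right
  refine indep_of_indep_of_le_left (indep_of_indep_of_le_right hindep ?_) ?_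
  · refine iSup₂_le fun s hs => (hdiff hu' (hFT s hs) (by linarith [(hF hs).1]) ?_).comap_le
    rintro k ⟨hk₁, hk₂⟩ (hk | hk)
    · omega
    · have := hρ.invFun_le_invFun (hFT s hs) hℓu (by linarith [(hF hs).2])
      omega
  · have hBu : Measurable[⨆ k ∈ I, m k] fun ω => B u ω := by
      simpa only [hB.init, sub_zero] using hdiff h0 hu' hu fun k hk => Or.inl hk.2
    exact (hBu.prodMk (hdiff hℓu ht' ht fun k hk => Or.inr hk.1)).comap_le

lemma indep_comap_incrementSigma (hB : IsBrownianMotion P B) {u ℓ t : ℝ} (hu : 0 ≤ u)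
    (hℓ : 0 ≤ ℓ) (ht : ℓ + u ≤ t) :
    Indep (MeasurableSpace.comap (fun ω => (B u ω, B t ω - B (ℓ + u) ω)) inferInstance)
      (incrementSigma B u ℓ) P :=
  have := hB.isProbability
  indep_biSup_of_forall_finset
    ((hB.measurable u).prodMk ((hB.measurable t).sub (hB.measurable _))).comap_le
    (fun _ => ((hB.measurable _).sub (hB.measurable u)).comap_le)
    fun _ hF => hB.indep_comap_iSup_finset hu hℓ ht hF

lemma measure_mem_Icc_inter_le (hB : IsBrownianMotion P B) {u ℓ t a b : ℝ} (hu : 0 ≤ u)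
    (hℓ : 0 ≤ ℓ) (hℓu : ℓ + u ≤ t) (hℓt : ℓ < t) {A : Set Ω}
    (hA : MeasurableSet[incrementSigma B u ℓ] A) :
    P ({ω | B t ω ∈ Icc a b} ∩ A) ≤ ENNReal.ofReal ((b - a) / √(2 * π * (t - ℓ))) * P A := by
  have hP := hB.isProbability
  have hind := indep_of_indep_of_le_left (hB.indep_comap_incrementSigma hu hℓ hℓu)
    ((measurable_fst.add measurable_snd).comp (comap_measurable _)).comap_le
  have hsplit : ∀ ω, B u ω + (B t ω - B (ℓ + u) ω) + (B (ℓ + u) ω - B u ω) = B t ω :=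
    fun ω => by ring
  have hvar : ((u + (t - (ℓ + u))).toNNReal : ℝ) = t - ℓ := by
    rw [Real.coe_toNNReal _ (by linarith)]
    ring
  have hne : (u + (t - (ℓ + u))).toNNReal ≠ 0 := by
    rw [← NNReal.coe_ne_zero, hvar]
    linarith
  have hset : {ω | B t ω ∈ Icc a b} =
      {ω | B u ω + (B t ω - B (ℓ + u) ω) + (B (ℓ + u) ω - B u ω) ∈ Icc a b} := by
    simp only [hsplit]
  rw [hset]
  refine measure_add_mem_inter_le (hB.incrementSigma_le u ℓ) ((hB.measurable u).add
    ((hB.measurable t).sub (hB.measurable _))) hind (measurable_incrementSigma ⟨hℓ, le_rfl⟩) hA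
    measurableSet_Icc fun x => ?_
  calc P.map _ ((· + x) ⁻¹' Icc a b)
      = gaussianReal 0 _ (Icc (a - x) (b - x)) := by
        rw [hB.map_add_sub hu (by linarith) hℓu, preimage_add_const_Icc]
    _ ≤ ENNReal.ofReal ((b - x - (a - x)) / √(2 * π * (u + (t - (ℓ + u))).toNNReal)) :=
        gaussianReal_Icc_le 0 hne _ _
    _ = ENNReal.ofReal ((b - a) / √(2 * π * (t - ℓ))) := by
        rw [hvar, sub_sub_sub_cancel_right]

end IsBrownianMotion

/-- There is a universal constant `c > 0` such that for any Brownian motion, `t ≥ 1`,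
`0 ≤ u ≤ t - 1`, `z ≥ 0`, and any event `A` measurable with respect to the σ-algebra
generated by the increments `(B_{s+u} - B_u)_{s ∈ [0,1]}`,
`P({B_t ∈ [z, z+1]} ∩ A) ≤ c/√t · P(A)`. -/
theorem brownian_endpoint_with_increment_event
    {Ω : Type*} [MeasurableSpace Ω] (P : Measure Ω) (B : ℝ → Ω → ℝ)
    (hB : IsBrownianMotion P B) :
    ∃ c : ℝ, 0 < c ∧ ∀ t u z : ℝ, 1 ≤ t → 0 ≤ u → u ≤ t - 1 → 0 ≤ z →
      ∀ A : Set Ω,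
        MeasurableSet[⨆ s ∈ Set.Icc (0 : ℝ) 1,
          MeasurableSpace.comap (fun ω => B (s + u) ω - B u ω) inferInstance] A →
        P ({ω | B t ω ∈ Set.Icc z (z + 1)} ∩ A)
          ≤ ENNReal.ofReal (c / Real.sqrt t) * P A := by
  have hP := hB.isProbability
  refine ⟨2, two_pos, fun t u z ht hu hut _ A hA => ?_⟩
  rcases lt_or_ge t 2 with ht2 | ht2
  · have h1 : 1 ≤ ENNReal.ofReal (2 / √t) := by
      rw [ENNReal.one_le_ofReal, le_div_iff₀ (Real.sqrt_pos.2 (by linarith)), one_mul]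
      exact ((Real.sqrt_lt' two_pos).2 (by linarith)).le
    exact (measure_mono inter_subset_right).trans (le_mul_of_one_le_left' h1)
  calc P ({ω | B t ω ∈ Icc z (z + 1)} ∩ A)
      ≤ ENNReal.ofReal ((z + 1 - z) / √(2 * π * (t - 1))) * P A :=
        hB.measure_mem_Icc_inter_le hu zero_le_one (by linarith) (by linarith) hA
    _ ≤ ENNReal.ofReal (2 / √t) * P A := by
        rw [add_sub_cancel_left]
        gcongr ENNReal.ofReal ?_ * _
        exact one_div_sqrt_two_pi_mul_sub_one_le ht2
end

section
/- Let (R_t) be a three-dimensional Bessel process started from 0, with density P(R_t ∈ dx) = √(2/(π t³)) x² exp(-x²/(2t)) dx on (0,∞). Let m > 0, γ ∈ [0, m], and F : ℝ → [0, m] be continuous. Then as t → ∞ and b → ∞ with b ≥ t^{1/4}, t^{3/2} · E[ F(b - R_t) · 1{γ ≥ R_t - b + m ≥ 0} / (R_t + γ) ] = √(2/π) · b · e^{-b²/(2t)} · ∫_{m-γ}^{m} F(u) du · (1 + o(1)), where the o(1) is uniform over γ ∈ [0,m] and F bounded by m. In particular, the exact identity t^{3/2} E[F(b-R_t) 1{...}/(R_t+γ)]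 = √(2/π) ∫_{m-γ}^{m} F(u) (b-u)²/(b-u+γ) exp(-(b-u)²/(2t)) du holds for all t, b > 0 with b > m. -/
/-!
Substituting `x = b - u` turns the expectation into `√(2/π) ∫_{m-γ}^m F(u) K(u) du` with the
kernel `K(u) = (b-u)²/(b-u+γ) e^{-(b-u)²/(2t)}`, so it suffices to show that `K(u)` is
`b e^{-b²/(2t)}` up to an error `ε + ε b e^{-b²/(2t)}`, uniformly in `t`, `γ ∈ [0,m]` and
`u ∈ [0,m]`, once `b` is large; `b ≥ t^{1/4}` with `t → ∞` forces this. The prefactor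
`(b-u)²/(b-u+γ)` is within `2m` of `b`, and `e^{-(b-u)²/(2t)} ≤ e^{-b²/(2t)} e^{bu/t}`. If
`bm/t ≤ δ`, the two Gaussian factors agree up to a relative error `2δ`; otherwise
`b²/t ≥ δb/m`, and everything is bounded by `b e^{-δb/(8m)}`, which is small for large `b`.
-/

open MeasureTheory Set

/-- Expectation against the time-`t` marginal density `√(2/(πt³)) x² e^{-x²/(2t)}` of the
three-dimensional Bessel process started from `0`, of the functional
`F(b - R_t) 1{γ ≥ R_t - b + m ≥ 0} / (R_t + γ)`. -/
noncomputable def besselExpectation (t b m γ : ℝ) (F : ℝ → ℝ) : ℝ :=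
  ∫ x in Set.Ioi (0 : ℝ),
    Set.indicator {x : ℝ | 0 ≤ x - b + m ∧ x - b + m ≤ γ}
      (fun x => F (b - x) / (x + γ)) x *
    (Real.sqrt (2 / (Real.pi * t ^ 3)) * x ^ 2 * Real.exp (-(x ^ 2) / (2 * t)))

open Filter Real

theorem rpow_three_halves_mul_sqrt_div_pow_three (c : ℝ) {t : ℝ} (ht : 0 < t) :
    t ^ ((3 : ℝ) / 2) * √(c / t ^ 3) = √c := by
  have h : √(t ^ 3) = t ^ ((3 : ℝ) / 2) := by
    rw [sqrt_eq_rpow, ← rpow_natCast, ← rpow_mul ht.le]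
    norm_num
  rw [sqrt_div' c (by positivity), h, mul_div_cancel₀ _ (rpow_pos_of_pos ht _).ne']

theorem besselExpectation_eq_intervalIntegral {t b m γ : ℝ} (hmb : m < b) (hγ : 0 ≤ γ)
    (F : ℝ → ℝ) :
    besselExpectation t b m γ F =
      ∫ u in (m - γ)..m, F u / (b - u + γ) *
        (√(2 / (π * t ^ 3)) * (b - u) ^ 2 * exp (-((b - u) ^ 2) / (2 * t))) := by
  set f : ℝ → ℝ := fun u =>
    F u / (b - u + γ) * (√(2 / (π * t ^ 3)) * (b - u) ^ 2 * exp (-((b - u) ^ 2) / (2 * t)))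
  have hwindow : {x : ℝ | 0 ≤ x - b + m ∧ x - b + m ≤ γ} = Icc (b - m) (b - m + γ) := by
    ext x
    exact ⟨fun h => ⟨by linarith [h.1], by linarith [h.2]⟩,
      fun h => ⟨by linarith [h.1], by linarith [h.2]⟩⟩
  have hsub : Icc (b - m) (b - m + γ) ⊆ Ioi 0 := fun x hx => mem_Ioi.2 (by linarith [hx.1])
  calc besselExpectation t b m γ F
      = ∫ x in Ioi 0, (Icc (b - m) (b - m + γ)).indicator (fun x => f (b - x)) x := by
        rw [besselExpectation, hwindow]
        congr 1 with x
        simp only [indicator_apply, f, sub_sub_cancel, ite_mul, zero_mul]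
    _ = ∫ x in (b - m)..(b - m + γ), f (b - x) := by
        rw [setIntegral_indicator measurableSet_Icc, inter_eq_self_of_subset_right hsub,
          integral_Icc_eq_integral_Ioc, intervalIntegral.integral_of_le (by linarith)]
    _ = ∫ u in (m - γ)..m, f u := by
        rw [intervalIntegral.integral_comp_sub_left, sub_sub_cancel, sub_add_eq_sub_sub,
          sub_sub_cancel]

theorem rpow_three_halves_mul_besselExpectation {t b m γ : ℝ} (ht : 0 < t) (hmb : m < b)
    (hγ : 0 ≤ γ) (F : ℝ → ℝ) :
    t ^ ((3 : ℝ) / 2) * besselExpectation t b m γ F =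
      √(2 / π) * ∫ u in (m - γ)..m,
        F u * ((b - u) ^ 2 / (b - u + γ)) * exp (-((b - u) ^ 2) / (2 * t)) := by
  rw [besselExpectation_eq_intervalIntegral hmb hγ, ← intervalIntegral.integral_const_mul,
    ← intervalIntegral.integral_const_mul]
  congr 1 with u
  rw [← div_div, ← rpow_three_halves_mul_sqrt_div_pow_three (2 / π) ht]
  ring

theorem abs_sq_div_add_sub_le {x γ : ℝ} (hx : 0 < x) (hγ : 0 ≤ γ) :
    |x ^ 2 / (x + γ) - x| ≤ γ := by
  have hxγ : 0 < x + γ := by linarith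
  rw [show x ^ 2 / (x + γ) - x = -(γ * (x / (x + γ))) by field_simp; ring, abs_neg,
    abs_of_nonneg (by positivity)]
  exact mul_le_of_le_one_right hγ ((div_le_one hxγ).2 (by linarith))

section Gaussian

variable {t b u : ℝ}

theorem exp_neg_sq_div_le_exp_neg_sub_sq_div (ht : 0 < t) (hu : 0 ≤ u) (hub : u ≤ 2 * b) :
    exp (-(b ^ 2) / (2 * t)) ≤ exp (-((b - u) ^ 2) / (2 * t)) :=
  exp_le_exp.2 (div_le_div_of_nonneg_right (by nlinarith) (by positivity))

theorem exp_neg_sub_sq_div_le (ht : 0 < t) :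
    exp (-((b - u) ^ 2) / (2 * t)) ≤ exp (-(b ^ 2) / (2 * t)) * exp (b * u / t) := by
  have hsplit : -((b - u) ^ 2) / (2 * t) = -(b ^ 2) / (2 * t) + b * u / t - u ^ 2 / (2 * t) := by
    field_simp
    ring
  rw [← exp_add, hsplit]
  gcongr
  linarith [div_nonneg (sq_nonneg u) (by positivity : (0 : ℝ) ≤ 2 * t)]

theorem exp_neg_sub_sq_div_sub_le (ht : 0 < t) (hu : 0 ≤ u) (hb : 0 ≤ b)
    (hbu : b * u / t ≤ 1) :
    exp (-((b - u) ^ 2) / (2 * t)) - exp (-(b ^ 2) / (2 * t))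
      ≤ 2 * (b * u / t) * exp (-(b ^ 2) / (2 * t)) := by
  have hq : 0 ≤ b * u / t := div_nonneg (mul_nonneg hb hu) ht.le
  have hexp : exp (b * u / t) - 1 ≤ 2 * (b * u / t) := by
    have h := abs_exp_sub_one_le (x := b * u / t) (by rwa [abs_of_nonneg hq])
    rw [abs_of_nonneg hq] at h
    exact (abs_le.1 h).2
  nlinarith [exp_neg_sub_sq_div_le (u := u) (b := b) ht, exp_pos (-(b ^ 2) / (2 * t))]

theorem exp_neg_sub_sq_div_le_exp_neg_mul {m δ : ℝ} (hm : 0 < m) (ht : 0 < t)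
    (hum : u ≤ m) (hmb : 2 * m ≤ b) (hδ : δ ≤ b * m / t) :
    exp (-((b - u) ^ 2) / (2 * t)) ≤ exp (-(δ / (8 * m)) * b) := by
  have hδt : δ * t ≤ b * m := (le_div_iff₀ ht).1 hδ
  gcongr
  rw [neg_div, neg_mul, neg_le_neg_iff, div_mul_eq_mul_div,
    div_le_div_iff₀ (by positivity) (by positivity)]
  nlinarith [mul_le_mul_of_nonneg_left hδt (by linarith : (0 : ℝ) ≤ b),
    mul_nonneg (by linarith : (0 : ℝ) ≤ b - 2 * u) (by linarith : (0 : ℝ) ≤ 3 * b - 2 * u)]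

end Gaussian

theorem eventually_abs_sq_div_mul_exp_sub_le {m ε : ℝ} (hm : 0 < m) (hε : 0 < ε) :
    ∀ᶠ b in atTop, ∀ t γ u : ℝ, 0 < t → 0 ≤ γ → γ ≤ m → 0 ≤ u → u ≤ m →
      |(b - u) ^ 2 / (b - u + γ) * exp (-((b - u) ^ 2) / (2 * t))
          - b * exp (-(b ^ 2) / (2 * t))|
        ≤ ε + ε * b * exp (-(b ^ 2) / (2 * t)) := by
  set δ := min 1 (ε / 4)
  have hδ : 0 < δ := lt_min one_pos (by positivity)
  have hdecay := tendsto_rpow_mul_exp_neg_mul_atTop_nhds_zero 1 (δ / (8 * m)) (by positivity)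
  filter_upwards [eventually_ge_atTop (2 * m), eventually_ge_atTop (12 * m / ε),
    hdecay.eventually (ge_mem_nhds (half_pos hε))]
    with b h2m h12m hdecay_b t γ u ht hγ0 hγm hu0 hum
  rw [div_le_iff₀ hε] at h12m
  set A := (b - u) ^ 2 / (b - u + γ)
  set E := exp (-(b ^ 2) / (2 * t))
  set Eu := exp (-((b - u) ^ 2) / (2 * t))
  have hb : 0 ≤ b := by linarith
  have hE : 0 < E := exp_pos _
  have hEu : 0 < Eu := exp_pos _
  have hEEu : E ≤ Eu := exp_neg_sq_div_le_exp_neg_sub_sq_div ht hu0 (by linarith)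
  have hA : |A - b| ≤ 2 * m := by
    have hAx := abs_sq_div_add_sub_le (x := b - u) (by linarith) hγ0
    calc |A - b| = |(A - (b - u)) - u| := by ring_nf
      _ ≤ γ + u := (abs_sub _ _).trans (add_le_add hAx (abs_of_nonneg hu0).le)
      _ ≤ 2 * m := by linarith
  have hsplit : |A * Eu - b * E| ≤ 2 * m * Eu + b * (Eu - E) := by
    calc |A * Eu - b * E| = |(A - b) * Eu + b * (Eu - E)| := by ring_nf
      _ ≤ |(A - b) * Eu| + |b * (Eu - E)| := abs_add_le _ _
      _ = |A - b| * Eu + b * (Eu - E) := by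
        rw [abs_mul, abs_of_pos hEu, abs_of_nonneg (mul_nonneg hb (sub_nonneg.2 hEEu))]
      _ ≤ 2 * m * Eu + b * (Eu - E) := by gcongr
  rcases le_or_gt (b * m / t) δ with hsmall | hlarge
  · have hbu : b * u / t ≤ δ := le_trans (by gcongr) hsmall
    have hδ1 : δ ≤ 1 := min_le_left _ _
    have hδε : δ ≤ ε / 4 := min_le_right _ _
    have hdiff : Eu - E ≤ 2 * δ * E :=
      (exp_neg_sub_sq_div_sub_le ht hu0 hb (hbu.trans hδ1)).trans (by gcongr)
    have hdrift : b * (Eu - E) ≤ ε / 2 * b * E := by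
      nlinarith [mul_le_mul_of_nonneg_left hdiff hb, mul_le_mul_of_nonneg_right hδε hE.le]
    have hprefactor : 2 * m * Eu ≤ ε / 2 * b * E := by
      nlinarith [mul_le_mul_of_nonneg_right hδ1 hE.le, mul_le_mul_of_nonneg_right h12m hE.le]
    calc |A * Eu - b * E| ≤ 2 * m * Eu + b * (Eu - E) := hsplit
      _ ≤ ε * b * E := by linarith
      _ ≤ ε + ε * b * E := by linarith
  · have hEu := exp_neg_sub_sq_div_le_exp_neg_mul hm ht hum h2m hlarge.le
    rw [rpow_one] at hdecay_b
    calc |A * Eu - b * E| ≤ 2 * m * Eu + b * (Eu - E) := hsplit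
      _ ≤ 2 * (b * exp (-(δ / (8 * m)) * b)) := by nlinarith
      _ ≤ ε := by linarith
      _ ≤ ε + ε * b * E := by nlinarith

theorem abs_integral_mul_sub_mul_integral_le {f g : ℝ → ℝ} {a b c M C : ℝ} (hab : a ≤ b)
    (hfg : IntervalIntegrable (fun x => f x * g x) volume a b)
    (hf : IntervalIntegrable f volume a b)
    (hfM : ∀ x ∈ Ioc a b, |f x| ≤ M) (hgC : ∀ x ∈ Ioc a b, |g x - c| ≤ C) :
    |(∫ x in a..b, f x * g x) - c * ∫ x in a..b, f x| ≤ M * C * (b - a) := by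
  rw [← intervalIntegral.integral_const_mul,
    ← intervalIntegral.integral_sub hfg (hf.const_mul c)]
  have h := intervalIntegral.norm_integral_le_of_norm_le_const (a := a) (b := b) (C := M * C)
    (f := fun x => f x * g x - c * f x) fun x hx => by
      rw [uIoc_of_le hab] at hx
      rw [Real.norm_eq_abs, show f x * g x - c * f x = f x * (g x - c) by ring, abs_mul]
      exact mul_le_mul (hfM x hx) (hgC x hx) (abs_nonneg _) ((abs_nonneg _).trans (hfM x hx))
  rwa [Real.norm_eq_abs, abs_of_nonneg (sub_nonneg.2 hab)] at h

theorem intervalIntegrable_mul_sq_div_mul_exp {F : ℝ → ℝ} {t b m γ : ℝ} (hF : Continuous F)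
    (hmb : m < b) (hγ : 0 ≤ γ) :
    IntervalIntegrable
      (fun u => F u * ((b - u) ^ 2 / (b - u + γ) * exp (-((b - u) ^ 2) / (2 * t))))
      volume (m - γ) m := by
  refine (hF.continuousOn.mul (ContinuousOn.mul (ContinuousOn.div (by fun_prop) (by fun_prop)
    fun u hu => ?_) (by fun_prop))).intervalIntegrable
  rw [uIcc_of_le (sub_le_self m hγ)] at hu
  exact (by linarith [hu.2] : 0 < b - u + γ).ne'

theorem le_of_pow_four_le_of_rpow_le {B t b : ℝ} (hB : 0 ≤ B) (hBt : B ^ 4 ≤ t)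
    (htb : t ^ ((1 : ℝ) / 4) ≤ b) : B ≤ b := calc
  B = (B ^ 4) ^ ((1 : ℝ) / 4) := by rw [← rpow_natCast, ← rpow_mul hB]; norm_num
  _ ≤ t ^ ((1 : ℝ) / 4) := by gcongr
  _ ≤ b := htb

/-- For the 3d Bessel process from `0`: the exact identity
`t^{3/2} E[F(b-R_t) 1{γ ≥ R_t-b+m ≥ 0}/(R_t+γ)]
  = √(2/π) ∫_{m-γ}^m F(u) (b-u)²/(b-u+γ) e^{-(b-u)²/(2t)} du`
holds for all `t, b > 0` with `b > m`; moreover as `t → ∞`, `b ≥ t^{1/4}`, uniformly over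
`γ ∈ [0,m]` and continuous `F` with `0 ≤ F ≤ m`, the left-hand side equals
`√(2/π) b e^{-b²/(2t)} ∫_{m-γ}^m F(u) du` up to an error at most `ε + ε b e^{-b²/(2t)}`. -/
theorem bessel_renewal_asymptotics (m : ℝ) (hm : 0 < m) :
    (∀ t b γ : ℝ, 0 < t → 0 < b → m < b → 0 ≤ γ → γ ≤ m →
      ∀ F : ℝ → ℝ, Continuous F → (∀ u, 0 ≤ F u ∧ F u ≤ m) →
        t ^ ((3 : ℝ) / 2) * besselExpectation t b m γ F =
          Real.sqrt (2 / Real.pi) *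
            ∫ u in (m - γ)..m,
              F u * ((b - u) ^ 2 / (b - u + γ)) * Real.exp (-((b - u) ^ 2) / (2 * t))) ∧
    (∀ ε : ℝ, 0 < ε → ∃ T : ℝ, 0 < T ∧ ∀ t b γ : ℝ, T ≤ t → t ^ ((1 : ℝ) / 4) ≤ b →
      0 ≤ γ → γ ≤ m →
      ∀ F : ℝ → ℝ, Continuous F → (∀ u, 0 ≤ F u ∧ F u ≤ m) →
        |t ^ ((3 : ℝ) / 2) * besselExpectation t b m γ F -
            Real.sqrt (2 / Real.pi) * b * Real.exp (-(b ^ 2) / (2 * t)) *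
              ∫ u in (m - γ)..m, F u|
          ≤ ε + ε * b * Real.exp (-(b ^ 2) / (2 * t))) := by
  refine ⟨fun t b γ ht _ hmb hγ _ F _ _ =>
    rpow_three_halves_mul_besselExpectation ht hmb hγ F, ?_⟩
  intro ε hε
  obtain ⟨B, hB⟩ := eventually_atTop.1 ((eventually_gt_atTop m).and
    (eventually_abs_sq_div_mul_exp_sub_le hm (by positivity : 0 < ε / m ^ 2)))
  refine ⟨max B 1 ^ 4, by positivity, fun t b γ hT hb hγ0 hγm F hF hFm => ?_⟩
  have ht : 0 < t := lt_of_lt_of_le (by positivity) hT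
  obtain ⟨hmb, hpointwise⟩ :=
    hB b ((le_max_left B 1).trans (le_of_pow_four_le_of_rpow_le (by positivity) hT hb))
  set E := exp (-(b ^ 2) / (2 * t))
  have hbound := abs_integral_mul_sub_mul_integral_le (c := b * E) (M := m)
    (C := ε / m ^ 2 + ε / m ^ 2 * b * E) (sub_le_self m hγ0)
    (intervalIntegrable_mul_sq_div_mul_exp hF hmb hγ0) (hF.intervalIntegrable _ _)
    (fun u _ => (abs_of_nonneg (hFm u).1).trans_le (hFm u).2)
    fun u hu => hpointwise t γ u ht hγ0 hγm (by linarith [hu.1]) hu.2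
  have hsqrt : √(2 / π) ≤ 1 :=
    sqrt_le_one.2 ((div_le_one pi_pos).2 (by linarith [pi_gt_three]))
  have hC : 0 ≤ ε / m ^ 2 + ε / m ^ 2 * b * E := by
    have hb0 : 0 ≤ b := by linarith
    positivity
  rw [rpow_three_halves_mul_besselExpectation ht hmb hγ0 F, mul_assoc (√(2 / π)) b,
    mul_assoc, ← mul_sub, abs_mul, abs_of_nonneg (sqrt_nonneg _)]
  simp only [← mul_assoc] at hbound ⊢
  calc √(2 / π) * |_| ≤ |_| := mul_le_of_le_one_left (abs_nonneg _) hsqrt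
    _ ≤ m * (ε / m ^ 2 + ε / m ^ 2 * b * E) * (m - (m - γ)) := hbound
    _ ≤ m * (ε / m ^ 2 + ε / m ^ 2 * b * E) * m := by gcongr; linarith
    _ = ε + ε * b * E := by field_simp
end
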